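/- Let F be a field and M ∈ SL(n, F) such that all anti-leading principal minors of M are non-zero. Then M can be written M = V·Δ·Λ where V is unit upper triangular, Λ is unit lower triangular, and Δ is the diagonal matrix with Δ_{pp} = η_p/η_{p−1}, where η_p = (M(p+1…n | p+1…n))^{−1} for 0 ≤ p ≤ n (with the convention that the empty minor is 1, so η_n appears via M(∅|∅)=1 and η_0 = (det M)^{-1} = 1). Moreover the entries are given by V_{pi} = M(p, i+1, …, n | i, i+1, …, n) · η_{i−1} for p ≤ i and Λ_{ip} = M(i, i+1, …, n | p, i+1, …, n) · η_{i−1} for i ≥ p. -/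

import Mathlib

/-
Write `A_j = M(j+1…n | j+1…n) = η_j⁻¹` and `E_j = M(p, j+1…n | q, j+1…n)` (1-indexed). For
`1 ≤ i ≤ n`, the Desnanot–Jacobi identity for the submatrix of `M` on rows `p, i, …, n` and
columns `q, i, …, n` reads `A_{i-1} E_i - M(i, i+1…n | q, i+1…n) M(p, i+1…n | i, i+1…n) =
E_{i-1} A_i`, that is `V_{pi} Δ_{ii} Λ_{iq} = E_i η_i - E_{i-1} η_{i-1}`. Summing over `i`
telescopes from `E_0 η_0 = 0` (row `p` occurs twice) to `E_n η_n = M_{pq}`; the factors vanish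
off their triangles for the same reason. Desnanot–Jacobi itself comes from
`T * [[adj₁₁, 0], [adj₂₁, 1]] = [[det T • 1, T₁₂], [0, T₂₂]]` (blocks of sizes `2` and `m`).
-/

/-- The anti-leading principal minor of `M` built from rows and columns `q+1,…,n`
(1-indexed), i.e. rows and columns `q,…,n-1` (0-indexed); for `q ≥ n` it is the empty
minor `1`. -/
def antiLeadMinor {F : Type*} [Field F] {n : ℕ} (M : Matrix (Fin n) (Fin n) F)
    (q : ℕ) : F :=
  (M.submatrix (fun l : Fin (n - q) => (⟨q + l.1, by have := l.2; omega⟩ : Fin n))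
    (fun l : Fin (n - q) => (⟨q + l.1, by have := l.2; omega⟩ : Fin n))).det

/-- `η_q = (M(q+1…n | q+1…n))⁻¹`. -/
def etaCoef {F : Type*} [Field F] {n : ℕ} (M : Matrix (Fin n) (Fin n) F) (q : ℕ) : F :=
  (antiLeadMinor M q)⁻¹

/-- The unit upper triangular factor `V`, with
`V_{pi} = M(p, i+1…n | i, i+1…n) · η_{i-1}` for `p ≤ i` (1-indexed). -/
def Vfactor {F : Type*} [Field F] {n : ℕ} (M : Matrix (Fin n) (Fin n) F) :
    Matrix (Fin n) (Fin n) F :=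
  Matrix.of fun p i : Fin n =>
    if p.1 ≤ i.1 then
      (M.submatrix
        (fun l : Fin (n - i.1) =>
          if l.1 = 0 then p else ⟨i.1 + l.1, by have := i.2; have := l.2; omega⟩)
        (fun l : Fin (n - i.1) =>
          (⟨i.1 + l.1, by have := i.2; have := l.2; omega⟩ : Fin n))).det * etaCoef M i.1
    else 0

/-- The unit lower triangular factor `Λ`, with
`Λ_{ip} = M(i, i+1…n | p, i+1…n) · η_{i-1}` for `i ≥ p` (1-indexed). -/
def Lfactor {F : Type*} [Field F] {n : ℕ} (M : Matrix (Fin n) (Fin n) F) :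
    Matrix (Fin n) (Fin n) F :=
  Matrix.of fun i p : Fin n =>
    if p.1 ≤ i.1 then
      (M.submatrix
        (fun l : Fin (n - i.1) =>
          (⟨i.1 + l.1, by have := i.2; have := l.2; omega⟩ : Fin n))
        (fun l : Fin (n - i.1) =>
          if l.1 = 0 then p else ⟨i.1 + l.1, by have := i.2; have := l.2; omega⟩)).det
        * etaCoef M i.1
    else 0

/-- The diagonal factor `Δ = diag(η₁/η₀, η₂/η₁, …, η_n/η_{n-1})`. -/
def Dfactor {F : Type*} [Field F] {n : ℕ} (M : Matrix (Fin n) (Fin n) F) :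
    Matrix (Fin n) (Fin n) F :=
  Matrix.diagonal fun q : Fin n => etaCoef M (q.1 + 1) / etaCoef M q.1

open Matrix Polynomial

namespace Matrix

variable {R : Type*} [CommRing R]

theorem det_mul_det_toBlocks₁₁_adjugate {ι κ : Type*} [Fintype ι] [Fintype κ] [DecidableEq ι]
    [DecidableEq κ] (T : Matrix (ι ⊕ κ) (ι ⊕ κ) R) :
    T.det * (adjugate T).toBlocks₁₁.det = T.det ^ Fintype.card ι * T.toBlocks₂₂.det := by
  set A := adjugate T
  have hTA : fromBlocks T.toBlocks₁₁ T.toBlocks₁₂ T.toBlocks₂₁ T.toBlocks₂₂ *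
      fromBlocks A.toBlocks₁₁ A.toBlocks₁₂ A.toBlocks₂₁ A.toBlocks₂₂ =
      fromBlocks (T.det • 1) 0 0 (T.det • 1) := by
    rw [fromBlocks_toBlocks, fromBlocks_toBlocks, T.mul_adjugate]
    ext (i | i) (j | j) <;> simp [one_apply]
  rw [fromBlocks_multiply, fromBlocks_inj] at hTA
  obtain ⟨h₁₁, -, h₂₁, -⟩ := hTA
  calc T.det * A.toBlocks₁₁.det
      = (fromBlocks T.toBlocks₁₁ T.toBlocks₁₂ T.toBlocks₂₁ T.toBlocks₂₂ *
          fromBlocks A.toBlocks₁₁ 0 A.toBlocks₂₁ 1).det := by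
        rw [det_mul, fromBlocks_toBlocks, det_fromBlocks_zero₁₂, det_one, mul_one]
    _ = (fromBlocks (T.det • 1) T.toBlocks₁₂ 0 T.toBlocks₂₂).det := by
        simp only [fromBlocks_multiply, h₁₁, h₂₁, Matrix.mul_zero, Matrix.mul_one, zero_add]
    _ = T.det ^ Fintype.card ι * T.toBlocks₂₂.det := by
        rw [det_fromBlocks_zero₂₁, det_smul, det_one, mul_one]

variable {m : ℕ}

theorem det_mul_desnanot_jacobi (T : Matrix (Fin (m + 2)) (Fin (m + 2)) R) :
    T.det * ((T.submatrix (Fin.succAbove 0) (Fin.succAbove 0)).det *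
        (T.submatrix (Fin.succAbove 1) (Fin.succAbove 1)).det -
      (T.submatrix (Fin.succAbove 0) (Fin.succAbove 1)).det *
        (T.submatrix (Fin.succAbove 1) (Fin.succAbove 0)).det) =
    T.det ^ 2 * (T.submatrix (Fin.succ ∘ Fin.succ) (Fin.succ ∘ Fin.succ)).det := by
  let e : Fin 2 ⊕ Fin m ≃ Fin (m + 2) := finSumFinEquiv.trans (finCongr (add_comm 2 m))
  have e₀ : e (.inl 0) = 0 := rfl
  have e₁ : e (.inl 1) = 1 := rfl
  have h₂₂ : (T.submatrix e e).toBlocks₂₂ =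
      T.submatrix (Fin.succ ∘ Fin.succ) (Fin.succ ∘ Fin.succ) := by
    ext b b'
    simp only [toBlocks₂₂, of_apply, submatrix_apply, Function.comp_apply]
    congr <;> exact Fin.ext (by simp [e])
  have key := det_mul_det_toBlocks₁₁_adjugate (T.submatrix e e)
  rw [det_submatrix_equiv_self, adjugate_submatrix_equiv_self, h₂₂, det_fin_two] at key
  simpa [toBlocks₁₁, e₀, e₁, adjugate_fin_succ_eq_det_submatrix, mul_comm] using key

theorem desnanot_jacobi (T : Matrix (Fin (m + 2)) (Fin (m + 2)) R) :
    (T.submatrix (Fin.succAbove 0) (Fin.succAbove 0)).det *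
        (T.submatrix (Fin.succAbove 1) (Fin.succAbove 1)).det -
      (T.submatrix (Fin.succAbove 0) (Fin.succAbove 1)).det *
        (T.submatrix (Fin.succAbove 1) (Fin.succAbove 0)).det =
    T.det * (T.submatrix (Fin.succ ∘ Fin.succ) (Fin.succ ∘ Fin.succ)).det := by
  -- cancel the determinant of the generic matrix `X + T`, which is monic, then evaluate at `X = 0`
  have hgen := det_mul_desnanot_jacobi (charmatrix (-T))
  rw [pow_two, mul_assoc] at hgen
  have hcancel := (charpoly_monic (-T)).isRegular.left hgen
  have heval : (charmatrix (-T)).map (eval 0) = T := by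
    ext i j
    by_cases h : i = j <;> simp [h]
  simpa only [map_sub, map_mul, RingHom.map_det, RingHom.mapMatrix_apply, ← submatrix_map,
    coe_evalRingHom, heval] using congrArg (evalRingHom 0) hcancel

theorem desnanot_jacobi_submatrix_cons {α β : Type*} (M : Matrix α β R) (r₀ r₁ : α) (c₀ c₁ : β)
    (s : Fin m → α) (t : Fin m → β) :
    (M.submatrix (Fin.cons r₁ s) (Fin.cons c₁ t)).det *
        (M.submatrix (Fin.cons r₀ s) (Fin.cons c₀ t)).det -
      (M.submatrix (Fin.cons r₁ s) (Fin.cons c₀ t)).det *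
        (M.submatrix (Fin.cons r₀ s) (Fin.cons c₁ t)).det =
    (M.submatrix (Fin.cons r₀ (Fin.cons r₁ s)) (Fin.cons c₀ (Fin.cons c₁ t))).det *
      (M.submatrix s t).det := by
  simpa only [submatrix_submatrix, ← Function.comp_assoc, Fin.succAbove_zero, Fin.cons_comp_succ,
    ← Fin.succ_zero_eq_one, Fin.cons_comp_succ_succAbove, Fin.removeNth_zero, Fin.tail_cons] using
    desnanot_jacobi (M.submatrix (Fin.cons r₀ (Fin.cons r₁ s)) (Fin.cons c₀ (Fin.cons c₁ t)))

theorem det_submatrix_congr_cast {α β : Type*} (M : Matrix α β R) {k k' : ℕ} (h : k = k')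
    {r : Fin k → α} {c : Fin k → β} {r' : Fin k' → α} {c' : Fin k' → β}
    (hr : ∀ l, r l = r' (Fin.cast h l)) (hc : ∀ l, c l = c' (Fin.cast h l)) :
    (M.submatrix r c).det = (M.submatrix r' c').det := by
  subst h
  congr
  exacts [funext hr, funext hc]

end Matrix

section IndicesFrom

variable {R : Type*} [CommRing R] {n : ℕ}

def indicesFrom (n j : ℕ) : Fin (n - j) → Fin n := fun l => ⟨j + l, by omega⟩

theorem indicesFrom_apply_eq_cons (j : Fin n) (l : Fin (n - j)) :
    indicesFrom n j l =
      (Fin.cons j (indicesFrom n (j + 1)) : Fin (n - (j + 1) + 1) → Fin n)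
        (Fin.cast (by omega) l) := by
  rcases l with ⟨_ | a, hl⟩
  · rfl
  · change indicesFrom n j ⟨a + 1, hl⟩ = indicesFrom n (j + 1) ⟨a, by omega⟩
    exact Fin.ext (by simp only [indicesFrom]; omega)

theorem ite_indicesFrom_eq_cons (j x : Fin n) (l : Fin (n - j)) :
    (if l.1 = 0 then x else indicesFrom n j l) =
      (Fin.cons x (indicesFrom n (j + 1)) : Fin (n - (j + 1) + 1) → Fin n)
        (Fin.cast (by omega) l) := by
  rcases l with ⟨_ | a, hl⟩
  · rfl
  · exact indicesFrom_apply_eq_cons j ⟨a + 1, hl⟩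

theorem det_submatrix_cons_indicesFrom_rows_eq_zero {β : Type*} (M : Matrix (Fin n) β R) {j : ℕ}
    {x : Fin n} (hx : j ≤ x) (c : Fin (n - j + 1) → β) :
    (M.submatrix (Fin.cons x (indicesFrom n j)) c).det = 0 := by
  refine det_zero_of_row_eq (Fin.succ_ne_zero ⟨x - j, by omega⟩).symm (funext fun k => ?_)
  simp only [submatrix_apply, Fin.cons_zero, Fin.cons_succ]
  congr
  exact Fin.ext (by simp only [indicesFrom]; omega)

theorem det_submatrix_cons_indicesFrom_cols_eq_zero {α : Type*} (M : Matrix α (Fin n) R) {j : ℕ}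
    {x : Fin n} (hx : j ≤ x) (r : Fin (n - j + 1) → α) :
    (M.submatrix r (Fin.cons x (indicesFrom n j))).det = 0 := by
  rw [← det_transpose, transpose_submatrix, det_submatrix_cons_indicesFrom_rows_eq_zero _ hx]

end IndicesFrom

section UL

variable {F : Type*} [Field F] {n : ℕ} (M : Matrix (Fin n) (Fin n) F)

/-- `M(p, j+1…n | q, j+1…n)` in the 1-indexed notation of the statement. -/
def borderedMinor (p q : Fin n) (j : ℕ) : F :=
  (M.submatrix (Fin.cons p (indicesFrom n j)) (Fin.cons q (indicesFrom n j))).det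

theorem antiLeadMinor_self : antiLeadMinor M n = 1 := by
  have : IsEmpty (Fin (n - n)) := ⟨fun l => by have := l.2; omega⟩
  exact det_isEmpty

theorem antiLeadMinor_eq_det_cons (i : Fin n) :
    antiLeadMinor M i = (M.submatrix (Fin.cons i (indicesFrom n (i + 1)))
      (Fin.cons i (indicesFrom n (i + 1)))).det :=
  det_submatrix_congr_cast M _ (indicesFrom_apply_eq_cons i) (indicesFrom_apply_eq_cons i)

theorem borderedMinor_eq_det_cons_cons (p q i : Fin n) :
    borderedMinor M p q i = (M.submatrix (Fin.cons p (Fin.cons i (indicesFrom n (i + 1))))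
      (Fin.cons q (Fin.cons i (indicesFrom n (i + 1))))).det := by
  refine det_submatrix_congr_cast M (by omega) (fun l => ?_) (fun l => ?_) <;>
  · rcases l with ⟨_ | a, hl⟩
    · rfl
    · exact indicesFrom_apply_eq_cons i ⟨a, by omega⟩

theorem borderedMinor_zero (p q : Fin n) : borderedMinor M p q 0 = 0 :=
  det_submatrix_cons_indicesFrom_rows_eq_zero M (Nat.zero_le p) _

theorem borderedMinor_self (p q : Fin n) : borderedMinor M p q n = M p q := by
  let : Unique (Fin (n - n + 1)) := ⟨⟨⟨0, by omega⟩⟩, fun l => Fin.ext (by have := l.2; omega)⟩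
  rw [borderedMinor, det_unique]
  rfl

theorem Vfactor_apply (p i : Fin n) :
    Vfactor M p i = (M.submatrix (Fin.cons p (indicesFrom n (i + 1)))
      (Fin.cons i (indicesFrom n (i + 1)))).det * etaCoef M i := by
  rw [Vfactor, of_apply]
  split_ifs
  · congr 1
    exact det_submatrix_congr_cast M _ (ite_indicesFrom_eq_cons i p) (indicesFrom_apply_eq_cons i)
  · rw [det_submatrix_cons_indicesFrom_rows_eq_zero M (by omega), zero_mul]

theorem Lfactor_apply (i q : Fin n) :
    Lfactor M i q = (M.submatrix (Fin.cons i (indicesFrom n (i + 1)))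
      (Fin.cons q (indicesFrom n (i + 1)))).det * etaCoef M i := by
  rw [Lfactor, of_apply]
  split_ifs
  · congr 1
    exact det_submatrix_congr_cast M _ (indicesFrom_apply_eq_cons i) (ite_indicesFrom_eq_cons i q)
  · rw [det_submatrix_cons_indicesFrom_cols_eq_zero M (by omega), zero_mul]

theorem Vfactor_mul_mul_Lfactor_eq_sub (p q i : Fin n) (hi : antiLeadMinor M i ≠ 0)
    (hi' : antiLeadMinor M (i + 1) ≠ 0) :
    Vfactor M p i * (etaCoef M (i + 1) / etaCoef M i) * Lfactor M i q =
      borderedMinor M p q (i + 1) * etaCoef M (i + 1) - borderedMinor M p q i * etaCoef M i := by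
  rw [Vfactor_apply, Lfactor_apply]
  set S := indicesFrom n (i + 1)
  have J : antiLeadMinor M i * borderedMinor M p q (i + 1) -
      (M.submatrix (Fin.cons i S) (Fin.cons q S)).det *
        (M.submatrix (Fin.cons p S) (Fin.cons i S)).det =
      borderedMinor M p q i * antiLeadMinor M (i + 1) := by
    rw [antiLeadMinor_eq_det_cons, borderedMinor_eq_det_cons_cons]
    exact desnanot_jacobi_submatrix_cons M p i q i S S
  simp only [etaCoef]
  field_simp
  linear_combination -J

end UL

theorem stmt_8 {F : Type*} [Field F] {n : ℕ}
    (M : Matrix (Fin n) (Fin n) F)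
    (hminor : ∀ q : ℕ, antiLeadMinor M q ≠ 0) :
    (∀ p, Vfactor M p p = 1) ∧ (∀ p, Lfactor M p p = 1) ∧
    M = Vfactor M * Dfactor M * Lfactor M := by
  refine ⟨fun p => ?_, fun p => ?_, ?_⟩
  · rw [Vfactor_apply, ← antiLeadMinor_eq_det_cons, etaCoef, mul_inv_cancel₀ (hminor p)]
  · rw [Lfactor_apply, ← antiLeadMinor_eq_det_cons, etaCoef, mul_inv_cancel₀ (hminor p)]
  ext p q
  let G : ℕ → F := fun j => borderedMinor M p q j * etaCoef M j
  calc M p q = G n - G 0 := by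
        simp [G, borderedMinor_self, borderedMinor_zero, etaCoef, antiLeadMinor_self]
    _ = ∑ i : Fin n, (G (i + 1) - G i) := by
        rw [Fin.sum_univ_eq_sum_range (fun j => G (j + 1) - G j), Finset.sum_range_sub]
    _ = ∑ i : Fin n, Vfactor M p i * (etaCoef M (i + 1) / etaCoef M i) * Lfactor M i q :=
        Finset.sum_congr rfl fun i _ =>
          (Vfactor_mul_mul_Lfactor_eq_sub M p q i (hminor i) (hminor (i + 1))).symm
    _ = (Vfactor M * Dfactor M * Lfactor M) p q := by
        rw [mul_apply, Dfactor]
        simp only [mul_diagonal]
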